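/- Let 0 < a₀ < a₁, let d ≥ 1, and let j₁, …, j_d be pairwise distinct positive integers. If c₁, …, c_d, α, β are real numbers such that ∑_{k=1}^{d} c_k · √(a²j_k² + 1) + α·a + β = 0 for every a ∈ [a₀, a₁], then c₁ = ⋯ = c_d = 0, α = 0 and β = 0. -/

import Mathlib

/-!
Substituting `t = a²` turns the relation into `∑ c_k (j_k² t + 1)^{1/2} + α t^{1/2} = -β` on an
open interval. The `n`-th derivative of `(p t + q)^s` is `(s)_n p^n (p t + q)^{s - n}`, with a
falling factorial `(s)_n ≠ 0` when `s ∉ ℕ`. So at an interior point `t₀` the derivatives of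
order `n ≥ 1` kill the constant and leave a Vandermonde system `∑ u_i V_i^m = 0` in the nodes
`V_i = p_i / (p_i t₀ + q_i)`, which are distinct because the affine maps are pairwise
non-proportional. Hence every coefficient vanishes, and then so does `β`.
-/

open Finset Filter Topology Polynomial

theorem eq_zero_of_forall_sum_mul_pow_eq_zero {R ι : Type*} [CommRing R] [IsDomain R]
    [Fintype ι] {v u : ι → R} (hv : Function.Injective v)
    (h : ∀ m : ℕ, ∑ i, u i * v i ^ m = 0) : u = 0 := by
  let e := Fintype.equivFin ι
  have hu : u ∘ e.symm = 0 :=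
    Matrix.eq_zero_of_forall_pow_sum_mul_pow_eq_zero (hv.comp e.symm.injective) fun m => by
      simpa only [Function.comp_apply, e.symm.sum_comp (fun i => u i * v i ^ (m : ℕ))] using h m
  funext i
  simpa using congrFun hu (e i)

theorem descPochhammer_eval_ne_zero {R : Type*} [CommRing R] [IsDomain R] {r : R}
    (hr : ∀ n : ℕ, r ≠ n) (k : ℕ) : (descPochhammer R k).eval r ≠ 0 := by
  rw [descPochhammer_eval_eq_prod_range, prod_ne_zero_iff]
  exact fun n _ => sub_ne_zero.mpr (hr n)

theorem iter_deriv_comp_mul_add {𝕜 : Type*} [NontriviallyNormedField 𝕜] (f : 𝕜 → 𝕜)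
    (p q : 𝕜) (k : ℕ) :
    deriv^[k] (fun t => f (p * t + q)) = fun t => p ^ k * deriv^[k] f (p * t + q) := by
  induction k with
  | zero => simp
  | succ k ih =>
    funext t
    rw [Function.iterate_succ_apply', ih, deriv_const_mul_field,
      deriv_comp_mul_left p (fun u => deriv^[k] f (u + q)), deriv_comp_add_const,
      Function.iterate_succ_apply', smul_eq_mul, pow_succ, mul_assoc]

theorem Real.iter_deriv_rpow_mul_add (s p q t : ℝ) (k : ℕ) :
    deriv^[k] (fun t => (p * t + q) ^ s) t =
      p ^ k * (descPochhammer ℝ k).eval s * (p * t + q) ^ (s - k) := by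
  rw [iter_deriv_comp_mul_add (· ^ s)]
  dsimp only
  rw [Real.iter_deriv_rpow_const, mul_assoc]

theorem eq_zero_of_sum_mul_rpow_mul_add_eventuallyEq_const {ι : Type*} [Fintype ι] {s : ℝ}
    (hs : ∀ n : ℕ, s ≠ n) {p q w : ι → ℝ} {t₀ C : ℝ} (hpos : ∀ i, 0 < p i * t₀ + q i)
    (hp : ∀ i, p i ≠ 0) (hpq : Pairwise fun i k => p i * q k ≠ p k * q i)
    (h : (fun t => ∑ i, w i * (p i * t + q i) ^ s) =ᶠ[𝓝 t₀] fun _ => C) : w = 0 := by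
  set x := fun i => p i * t₀ + q i
  set V := fun i => p i / x i
  have hV : Function.Injective V := by
    intro i k hik
    by_contra hne
    refine hpq hne ?_
    have := (div_eq_div_iff (hpos i).ne' (hpos k).ne').mp hik
    linear_combination this
  have hsmooth : ∀ (n : ℕ) i, ContDiffAt ℝ n (fun t => (p i * t + q i) ^ s) t₀ := fun n i =>
    ((contDiffAt_const.mul contDiffAt_id).add contDiffAt_const).rpow_const_of_ne (hpos i).ne'
  have hderiv : ∀ m : ℕ,
      (descPochhammer ℝ (m + 1)).eval s * ∑ i, (w i * x i ^ s * V i) * V i ^ m = 0 := by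
    intro m
    have h1 := h.iteratedDeriv_eq (m + 1)
    rw [iteratedDeriv_const, if_neg m.succ_ne_zero,
      iteratedDeriv_fun_sum fun i _ => contDiffAt_const.mul (hsmooth _ i)] at h1
    rw [← h1, mul_sum]
    refine sum_congr rfl fun i _ => ?_
    rw [iteratedDeriv_const_mul _ (hsmooth _ i), iteratedDeriv_eq_iterate,
      Real.iter_deriv_rpow_mul_add, Real.rpow_sub (hpos i), Real.rpow_natCast]
    have := (hpos i).ne'
    simp only [V, x, div_pow]
    field_simp
    ring
  have hu := eq_zero_of_forall_sum_mul_pow_eq_zero hV fun m =>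
    (mul_eq_zero.mp (hderiv m)).resolve_left (descPochhammer_eval_ne_zero hs _)
  funext i
  have := congrFun hu i
  simpa [V, x, hp i, (hpos i).ne', (Real.rpow_pos_of_pos (hpos i) s).ne'] using this

theorem nondegeneracy_extended_general (a₀ a₁ : ℝ) (h0 : 0 < a₀) (h01 : a₀ < a₁)
    (d : ℕ) (j : Fin d → ℕ) (hpos : ∀ k, 0 < j k)
    (hinj : Function.Injective j) (c : Fin d → ℝ) (α β : ℝ)
    (h : ∀ a ∈ Set.Icc a₀ a₁,
      (∑ k, c k * Real.sqrt (a ^ 2 * (j k : ℝ) ^ 2 + 1)) + α * a + β = 0) :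
    (∀ k, c k = 0) ∧ α = 0 ∧ β = 0 := by
  -- in `t = a²`, the term `α a = α (1 * t + 0) ^ (1/2)` gets the index `none`
  let p : Option (Fin d) → ℝ := fun i => i.elim 1 fun k => (j k : ℝ) ^ 2
  let q : Option (Fin d) → ℝ := fun i => i.elim 0 fun _ => 1
  let w : Option (Fin d) → ℝ := fun i => i.elim α c
  have hsq : a₀ ^ 2 < a₁ ^ 2 := pow_lt_pow_left₀ h01 h0.le two_ne_zero
  have hsub : ∀ t ∈ Set.Ioo (a₀ ^ 2) (a₁ ^ 2),
      ∑ i, w i * (p i * t + q i) ^ (1 / 2 : ℝ) = -β := by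
    intro t ht
    have ht₀ : 0 ≤ t := (sq_nonneg a₀).trans ht.1.le
    have := h √t ⟨Real.le_sqrt_of_sq_le ht.1.le,
      (Real.sqrt_le_sqrt ht.2.le).trans_eq (Real.sqrt_sq (h0.trans h01).le)⟩
    simp only [Real.sq_sqrt ht₀] at this
    simp only [Fintype.sum_option, w, p, q, Option.elim, one_mul, add_zero, ← Real.sqrt_eq_rpow]
    simp only [mul_comm _ t]
    linarith
  have hw : w = 0 := by
    refine eq_zero_of_sum_mul_rpow_mul_add_eventuallyEq_const (t₀ := (a₀ ^ 2 + a₁ ^ 2) / 2)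
      ?_ ?_ ?_ ?_ (eventually_of_mem (Ioo_mem_nhds (left_lt_add_div_two.mpr hsq)
        (add_div_two_lt_right.mpr hsq)) hsub)
    · intro n hn
      have : (2 * n : ℕ) = 1 := by exact_mod_cast (by linarith : (2 * n : ℝ) = 1)
      omega
    · rintro (_ | k) <;> simp only [p, q, Option.elim] <;> positivity
    · rintro (_ | k)
      · simp [p]
      · simp [p, (hpos k).ne']
    · rintro (_ | k) (_ | l) hkl <;> simp_all [p, q, hinj.eq_iff]
  have hc : ∀ k, c k = 0 := fun k => congrFun hw (some k)
  have hα : α = 0 := congrFun hw none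
  refine ⟨hc, hα, ?_⟩
  simpa [hc, hα] using h a₀ ⟨le_rfl, h01.le⟩

/-- Extended non-degeneracy: the family `{1, a, √(a²j₁²+1), …, √(a²j_d²+1)}`, with
pairwise distinct positive integers `j_k`, is linearly independent on `[a₀,a₁]`. -/
theorem nondegeneracy_extended (a₀ a₁ : ℝ) (h0 : 0 < a₀) (h01 : a₀ < a₁)
    (d : ℕ) (hd : 1 ≤ d) (j : Fin d → ℕ) (hpos : ∀ k, 0 < j k)
    (hinj : Function.Injective j) (c : Fin d → ℝ) (α β : ℝ)
    (h : ∀ a ∈ Set.Icc a₀ a₁,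
      (∑ k, c k * Real.sqrt (a ^ 2 * (j k : ℝ) ^ 2 + 1)) + α * a + β = 0) :
    (∀ k, c k = 0) ∧ α = 0 ∧ β = 0 :=
  nondegeneracy_extended_general a₀ a₁ h0 h01 d j hpos hinj c α β h
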